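/- Let P be a Łukasiewicz path and T = τ(P) the plane tree associated to P by the classical bijection. Then depth(P) = lthorn(T). -/

import Mathlib

/-! ## Plane trees -/

/-- A plane tree: a root together with an ordered (left-to-right) list of subtrees.
A node is a *leaf* if it has no children, and *internal* otherwise. -/
inductive PTree : Type where
  | node : List PTree → PTree


namespace Luka

/-! ## Łukasiewicz paths

A path is encoded by its list of step increments: the step `(1,k)` (an up-step `U_k` of
degree `k`) is encoded by `k : ℤ` with `k ≥ 0`, and the down step `D = (1,-1)` by `-1`. -/

/-- `P` is a Łukasiewicz path: it is nonempty, uses steps `(1,k)` with `k ≥ -1`,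
stays (weakly) above the `x`-axis before its last step, and ends at height `-1`
(so that it goes strictly below the axis only at the last step, which is forced
to be the down-step `D`). -/
def IsLukas (P : List ℤ) : Prop :=
  P ≠ [] ∧ (∀ s ∈ P, -1 ≤ s) ∧ (∀ n, n < P.length → 0 ≤ (P.take n).sum) ∧ P.sum = -1

/-- The degrees of the up-steps of `P`, from left to right (the *profile* of `P`). -/
def upDegs (P : List ℤ) : List ℕ := (P.filter (fun s => 0 ≤ s)).map Int.toNat

/-- The profile multiset `𝔐(P)`: the multiset of degrees of the up-steps of `P`. -/
def profileM (P : List ℤ) : Multiset ℕ := (upDegs P : Multiset ℕ)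

/-- The degree of the first up-step of `P`, if any. -/
def firstUp? (P : List ℤ) : Option ℕ := (upDegs P).head?

/-- The degree of the last up-step of `P`, if any. -/
def lastUp? (P : List ℤ) : Option ℕ := (upDegs P).getLast?

/-- Auxiliary: starting from height `h`, record the starting height of every up-step. -/
def areaVecAux : ℤ → List ℤ → List ℤ
  | _, [] => []
  | h, s :: rest => (if 0 ≤ s then [h] else []) ++ areaVecAux (h + s) rest

/-- The area vector `Area(P)`: the `i`-th entry is the `y`-coordinate of the starting
point of the `i`-th up-step of `P`. -/
def areaVec (P : List ℤ) : List ℤ := areaVecAux 0 P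

/-- `area(P)`: the sum of the entries of the area vector (entries of a Łukasiewicz
path are nonnegative, so taking `Int.toNat` entrywise is harmless). -/
def area (P : List ℤ) : ℕ := ((areaVec P).map Int.toNat).sum

/-- Auxiliary computation of the depth values: `cur` is the depth value of the previous
step (`0` initially), and `stack` holds the pending depth values of the future matching
down-steps (top of the stack = value for the next matching down-step to come).
Reading an up-step `U_k` whose value is `cur` (inherited from the previous step) pushes
the values `cur+1, …, cur+k` for its `k` matching down-steps (its first matching
down-step, which crosses its topmost interior level, gets `cur+1`, etc.); reading a
down-step pops its value.  The list returned records the value `d_i` of each up-step,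
from left to right. -/
def depthVecAux : ℕ → List ℕ → List ℤ → List ℕ
  | _, _, [] => []
  | cur, stack, s :: rest =>
    if 0 ≤ s then
      cur :: depthVecAux cur ((List.range s.toNat).map (fun i => cur + i + 1) ++ stack) rest
    else
      match stack with
      | [] => depthVecAux cur [] rest
      | v :: st => depthVecAux v st rest

/-- The depth vector `Depth(P)`: the values `d_i` at the up-steps of `P`, left to right. -/
def depthVec (P : List ℤ) : List ℕ := depthVecAux 0 [] P

/-- `depth(P)`: the sum of the entries of the depth vector. -/
def depth (P : List ℤ) : ℕ := (depthVec P).sum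

/-- `P ∈ 𝓛_M`. -/
def MemL (M : Multiset ℕ) (P : List ℤ) : Prop := IsLukas P ∧ profileM P = M

/-- `P ∈ 𝓛_{a,M}`: first up-step of degree `a`, profile multiset `M ⊎ {a}`. -/
def MemLa (a : ℕ) (M : Multiset ℕ) (P : List ℤ) : Prop :=
  IsLukas P ∧ firstUp? P = some a ∧ profileM P = a ::ₘ M

/-- `P ∈ 𝓛_{M,b}`: last up-step of degree `b`, profile multiset `M ⊎ {b}`. -/
def MemLb (M : Multiset ℕ) (b : ℕ) (P : List ℤ) : Prop :=
  IsLukas P ∧ lastUp? P = some b ∧ profileM P = b ::ₘ M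

/-- `P ∈ 𝓛_{a,M,b}`: first up-step of degree `a`, last up-step of degree `b`,
profile multiset `M ⊎ {a, b}`. -/
def MemLab (a : ℕ) (M : Multiset ℕ) (b : ℕ) (P : List ℤ) : Prop :=
  IsLukas P ∧ firstUp? P = some a ∧ lastUp? P = some b ∧ profileM P = a ::ₘ b ::ₘ M

/-! ## Plane-tree statistics -/

/-- The (ordered) children of the root of a plane tree. -/
def children : PTree → List PTree
  | .node ts => ts

/-- The degree of (the root of) a plane tree: its number of children. -/
def numChildren (t : PTree) : ℕ := (children t).length

mutual
/-- Number of internal nodes of a plane tree. -/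
def internCount : PTree → ℕ
  | .node [] => 0
  | .node (t :: ts) => 1 + internCountL (t :: ts)
def internCountL : List PTree → ℕ
  | [] => 0
  | t :: ts => internCount t + internCountL ts
end

mutual
/-- `lthornT T` = the sum of `lthorn(u)` over all internal nodes `u` of `T`, where
`lthorn(u)` is the number of descending edges of strict ancestors `v` of `u` lying to
the left of the path from `v` to `u`.  (Every internal node of the subtree rooted at
the `i`-th child (0-indexed) of a node gains `i` left thorns from that node.) -/
def lthornT : PTree → ℕ
  | .node ts => lthornL 0 ts
def lthornL : ℕ → List PTree → ℕ
  | _, [] => 0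
  | i, t :: ts => lthornT t + i * internCount t + lthornL (i + 1) ts
end

mutual
/-- `rthornT T` = the sum of `rthorn(u)` over all internal nodes `u` of `T`, where
`rthorn(u)` is the number of descending edges of strict ancestors `v` of `u` lying to
the right of the path from `v` to `u`. -/
def rthornT : PTree → ℕ
  | .node ts => rthornL ts
def rthornL : List PTree → ℕ
  | [] => 0
  | t :: ts => rthornT t + ts.length * internCount t + rthornL ts
end

mutual
/-- The list of the values `lthorn(u)` for the internal nodes `u` of `T`, in
contour-walk (preorder) order. -/
def lthornList : PTree → List ℕ
  | .node [] => []
  | .node (t :: ts) => 0 :: lthornLL 0 (t :: ts)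
def lthornLL : ℕ → List PTree → List ℕ
  | _, [] => []
  | i, t :: ts => (lthornList t).map (· + i) ++ lthornLL (i + 1) ts
end

mutual
/-- The list of the values `rthorn(u)` for the internal nodes `u` of `T`, in
contour-walk (preorder) order. -/
def rthornList : PTree → List ℕ
  | .node [] => []
  | .node (t :: ts) => 0 :: rthornLL (t :: ts)
def rthornLL : List PTree → List ℕ
  | [] => []
  | t :: ts => (rthornList t).map (· + ts.length) ++ rthornLL ts
end

/-! ## The bijections `λ` and `τ` -/

mutual
/-- `λ`: record each node of the tree at its first visit in the left-to-right contour
walk: `U_k` (i.e. `k`) for an internal node with `k+1` children, `D` (i.e. `-1`)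
for a leaf. -/
def lambdaT : PTree → List ℤ
  | .node ts => ((ts.length : ℤ) - 1) :: lambdaL ts
def lambdaL : List PTree → List ℤ
  | [] => []
  | t :: ts => lambdaT t ++ lambdaL ts
end

/-- Auxiliary for `τ`: reading the path from right to left, maintain the stack of the
already-built subtrees (in left-to-right order); a down-step `D` creates a leaf and an
up-step `U_k` grabs the `k+1` topmost subtrees as its children.  This builds the same
tree as the left-to-right "leftmost bud" construction. -/
def tauStack (P : List ℤ) : List PTree :=
  P.foldr (fun s st =>
    if s < 0 then PTree.node [] :: st
    else PTree.node (st.take (s.toNat + 1)) :: st.drop (s.toNat + 1)) []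

/-- `τ`: the plane tree associated with a Łukasiewicz path. -/
def tau (P : List ℤ) : PTree := (tauStack P).headD (.node [])

mutual
/-- The mirror of a plane tree: reverse the left-to-right order of the children of
every internal node. -/
def mir : PTree → PTree
  | .node ts => .node (mirL ts).reverse
def mirL : List PTree → List PTree
  | [] => []
  | t :: ts => mir t :: mirL ts
end

mutual
/-- The subtrees rooted at the internal nodes of `T`, in contour-walk (preorder)
order. -/
def internalSubtrees : PTree → List PTree
  | .node [] => []
  | .node (t :: ts) => .node (t :: ts) :: internalSubtreesL (t :: ts)
def internalSubtreesL : List PTree → List PTree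
  | [] => []
  | t :: ts => internalSubtrees t ++ internalSubtreesL ts
end

/-- The multiset of degrees of the non-root internal nodes of `T`. -/
def nonRootInternalDegs (T : PTree) : Multiset ℕ :=
  (((internalSubtreesL (children T)).map numChildren : List ℕ) : Multiset ℕ)

/-! ## Lodestars and the lodestar swap -/

/-- A node is a lodestar-type node if it is internal and all its children are leaves. -/
def isLodestarNode (t : PTree) : Bool :=
  !(children t).isEmpty && (children t).all (fun c => (children c).isEmpty)

mutual
/-- The subtree rooted at the *left lodestar* of `T`: the first internal node, in
contour-walk (preorder) order, all of whose children are leaves (if it exists). -/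
def leftLode? : PTree → Option PTree
  | .node ts =>
    if isLodestarNode (.node ts) then some (.node ts) else leftLodeL? ts
def leftLodeL? : List PTree → Option PTree
  | [] => none
  | t :: ts =>
    match leftLode? t with
    | some r => some r
    | none => leftLodeL? ts
end

mutual
/-- The subtree rooted at the *right lodestar* of `T`: the last internal node, in
contour-walk (preorder) order, all of whose children are leaves (if it exists). -/
def rightLode? : PTree → Option PTree
  | .node ts =>
    match rightLodeL? ts with
    | some r => some r
    | none => if isLodestarNode (.node ts) then some (.node ts) else none
def rightLodeL? : List PTree → Option PTree
  | [] => none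
  | t :: ts =>
    match rightLodeL? ts with
    | some r => some r
    | none => rightLode? t
end

mutual
/-- Replace the left lodestar of `T` (first preorder all-leaf-children internal node)
by the tree `r`; `none` if `T` has no internal node. -/
def replF : PTree → PTree → Option PTree
  | r, .node ts =>
    if isLodestarNode (.node ts) then some r
    else (replFL r ts).map PTree.node
def replFL : PTree → List PTree → Option (List PTree)
  | _, [] => none
  | r, t :: ts =>
    match replF r t with
    | some t' => some (t' :: ts)
    | none => (replFL r ts).map (t :: ·)
end

mutual
/-- Replace the right lodestar of `T` (last preorder all-leaf-children internal node)
by the tree `r`; `none` if `T` has no internal node. -/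
def replL : PTree → PTree → Option PTree
  | r, .node ts =>
    match replLL r ts with
    | some ts' => some (.node ts')
    | none => if isLodestarNode (.node ts) then some r else none
def replLL : PTree → List PTree → Option (List PTree)
  | _, [] => none
  | r, t :: ts =>
    match replLL r ts with
    | some ts' => some (t :: ts')
    | none => (replL r t).map (· :: ts)
end

/-- The lodestar swap: exchange the subtrees rooted at the left lodestar and the
right lodestar of `T` (each a node together with its pendant leaves). -/
def lodeSwap (T : PTree) : PTree :=
  match leftLode? T, rightLode? T with
  | some L, some R => ((replF R T).bind (replL L)).getD T
  | _, _ => T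

end Luka

/-!
The classical bijection `τ` has inverse `λ`, the preorder reading of a tree, so it suffices
to compute `depth (λ T)`.  In `λ T` an internal node with children `t₀, …, t_k` is an up-step
`U_k` whose `j`-th matching down-step (`j ≥ 1`) is the last step of `λ t_{j-1}`, so the depth
value entering the block `λ t_j` is the parent's value plus `j`.  Every up-step in `λ t_j` thus
gains `j` from the parent, which is exactly the count of left thorns that the internal nodes of
`t_j` receive from it.
-/

namespace Luka

theorem lthornL_add (ts : List PTree) (i j : ℕ) :
    lthornL (i + j) ts = lthornL i ts + j * internCountL ts := by
  induction ts generalizing i with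
  | nil => simp [lthornL, internCountL]
  | cons t ts ih =>
    rw [lthornL, lthornL, internCountL, Nat.add_right_comm i j 1, ih]
    ring

theorem depthVecAux_up {s : ℤ} (hs : 0 ≤ s) (cur : ℕ) (stack : List ℕ) (rest : List ℤ) :
    depthVecAux cur stack (s :: rest) =
      cur :: depthVecAux cur ((List.range s.toNat).map (fun i => cur + i + 1) ++ stack) rest := by
  rw [depthVecAux.eq_def]
  simp only [if_pos hs]

/- The existential value only matters when `st = []`: the last step of `λ T` then pops an
empty stack and leaves an unspecified current value behind. -/
mutual
theorem sum_depthVecAux_lambdaT_append (T : PTree) (cur : ℕ) (st : List ℕ) (rest : List ℤ) :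
    ∃ c, (depthVecAux cur st (lambdaT T ++ rest)).sum =
      lthornT T + cur * internCount T + (depthVecAux (st.headD c) st.tail rest).sum := by
  match T with
  | .node [] =>
    refine ⟨cur, ?_⟩
    cases st <;> simp [lambdaT, lambdaL, depthVecAux, lthornT, lthornL, internCount]
  | .node (t :: ts) =>
    obtain ⟨c, hc⟩ := sum_depthVecAux_lambdaL_append t ts cur st rest
    refine ⟨c, ?_⟩
    have hdeg : (((t :: ts).length : ℤ) - 1).toNat = ts.length := by simp
    rw [lambdaT, List.cons_append, depthVecAux_up (by simp), hdeg, List.sum_cons, hc,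
      lthornT, internCount, ← zero_add cur, lthornL_add]
    ring
termination_by sizeOf T
theorem sum_depthVecAux_lambdaL_append (t : PTree) (ts : List PTree) (cur : ℕ) (st : List ℕ)
    (rest : List ℤ) :
    ∃ c, (depthVecAux cur ((List.range ts.length).map (fun i => cur + i + 1) ++ st)
        (lambdaL (t :: ts) ++ rest)).sum =
      lthornL cur (t :: ts) + (depthVecAux (st.headD c) st.tail rest).sum := by
  match ts with
  | [] =>
    obtain ⟨c, hc⟩ := sum_depthVecAux_lambdaT_append t cur st rest
    refine ⟨c, ?_⟩
    simp [lambdaL, lthornL, hc]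
  | t' :: ts' =>
    obtain ⟨c, hc⟩ := sum_depthVecAux_lambdaL_append t' ts' (cur + 1) st rest
    have hstack : (List.range (t' :: ts').length).map (fun i => cur + i + 1) =
        (cur + 1) :: (List.range ts'.length).map (fun i => cur + 1 + i + 1) := by
      simp only [List.length_cons, List.range_succ_eq_map, List.map_cons, List.map_map]
      congr 1
      exact List.map_congr_left fun i _ => by simp only [Function.comp_apply]; omega
    obtain ⟨_, ht⟩ := sum_depthVecAux_lambdaT_append t cur
      ((cur + 1) :: ((List.range ts'.length).map (fun i => cur + 1 + i + 1) ++ st))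
      (lambdaL (t' :: ts') ++ rest)
    refine ⟨c, ?_⟩
    rw [hstack, lambdaL, List.append_assoc, List.cons_append, ht]
    simp only [List.headD_cons, List.tail_cons]
    rw [hc, lthornL.eq_2 cur]
    ring
termination_by sizeOf t + sizeOf ts
end

theorem depth_lambdaT (T : PTree) : depth (lambdaT T) = lthornT T := by
  obtain ⟨c, h⟩ := sum_depthVecAux_lambdaT_append T 0 [] []
  simpa [depth, depthVec, depthVecAux] using h

theorem lambdaL_append (ts us : List PTree) : lambdaL (ts ++ us) = lambdaL ts ++ lambdaL us := by
  induction ts with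
  | nil => rfl
  | cons t ts ih => simp [lambdaL, ih]

theorem tauStack_cons (s : ℤ) (Q : List ℤ) :
    tauStack (s :: Q) = if s < 0 then PTree.node [] :: tauStack Q
      else PTree.node ((tauStack Q).take (s.toNat + 1)) :: (tauStack Q).drop (s.toNat + 1) :=
  rfl

/- Reading right to left, the suffix condition says that an up-step `U_k` always finds at
least `k + 1` trees on the stack, which is what makes `λ` undo each step of `τ`. -/
theorem lambdaL_tauStack {Q : List ℤ} (hstep : ∀ s ∈ Q, -1 ≤ s)
    (hsuffix : ∀ n < Q.length, (Q.drop n).sum < 0) :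
    lambdaL (tauStack Q) = Q ∧ ((tauStack Q).length : ℤ) = -Q.sum := by
  induction Q with
  | nil => simp [tauStack, lambdaL]
  | cons s Q ih =>
    obtain ⟨hlam, hlen⟩ := ih (fun x hx => hstep x (List.mem_cons_of_mem s hx))
      (fun n hn => by simpa using hsuffix (n + 1) (by simpa using hn))
    have hsum : s + Q.sum < 0 := by simpa using hsuffix 0 (by simp)
    have hs := hstep s List.mem_cons_self
    rw [tauStack_cons]
    split_ifs with hneg
    · have : s = -1 := by omega
      simp [lambdaL, lambdaT, hlam, hlen, this]
    · have htake : ((tauStack Q).take (s.toNat + 1)).length = s.toNat + 1 := by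
        rw [List.length_take]; omega
      refine ⟨?_, ?_⟩
      · rw [lambdaL, lambdaT, htake, List.cons_append, ← lambdaL_append, List.take_append_drop,
          hlam]
        congr 1
        omega
      · rw [List.length_cons, List.length_drop, List.sum_cons]
        omega

theorem IsLukas.lambdaT_tau {P : List ℤ} (hP : IsLukas P) : lambdaT (tau P) = P := by
  obtain ⟨-, hstep, hprefix, hsum⟩ := hP
  have hsuffix : ∀ n < P.length, (P.drop n).sum < 0 := fun n hn => by
    have := List.sum_take_add_sum_drop P n
    have := hprefix n hn
    omega
  obtain ⟨hlam, hlen⟩ := lambdaL_tauStack hstep hsuffix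
  obtain ⟨T, hT⟩ : ∃ T, tauStack P = [T] :=
    List.length_eq_one_iff.mp (by omega)
  simpa [tau, hT, lambdaL] using hlam

end Luka

open Luka in
/-- **Proposition 3.4.**  Let `P` be a Łukasiewicz path and `T = τ(P)` the plane tree
associated to `P` by the classical bijection.  Then `depth(P) = lthorn(T)`. -/
theorem depth_eq_lthorn_tau (P : List ℤ) (hP : IsLukas P) :
    depth P = lthornT (tau P) := by
  simpa only [hP.lambdaT_tau] using depth_lambdaT (tau P)
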